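/- arXiv:1004.5302 — 3 statements merged into one kernel-verified Lean document; each statement's English description precedes it below -/
import Mathlib

section
/- Let B be a d×d real matrix with B^T + B ≤ 0, and V = {x : ‖e^{tB}x‖ = ‖x‖ for all t ∈ R}. Then the orthogonal complement V^⊥ of V is invariant under B. -/
open Matrix

/-- The Euclidean norm on `ℝ^d`. -/
noncomputable def eNorm {d : ℕ} (x : Fin d → ℝ) : ℝ := Real.sqrt (x ⬝ᵥ x)

/-!
Write `M = Bᵀ + B ≤ 0` and `u t = e^{tB} y`. Then `d/dt ‖u t‖² = ⟪u t, M u t⟫ ≤ 0`, so `y ∈ V`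
exactly when this derivative vanishes identically, i.e. (as `-M` is positive semidefinite)
when `M u t = 0` for all `t`. Differentiating `M u t = 0` gives `M e^{tB} (B y) = M B u t = 0`,
so `V` is `B`-invariant; and at `t = 0` it gives `Bᵀ y = -B y` on `V`. Hence for `x ⊥ V` and
`y ∈ V`, `⟪B x, y⟫ = ⟪x, Bᵀ y⟫ = -⟪x, B y⟫ = 0`.
-/

open NormedSpace

section Calculus

variable {𝕜 : Type*} [NontriviallyNormedField 𝕜] {m n : Type*} [Fintype m] [Fintype n]

theorem HasDerivAt.dotProduct {u v : 𝕜 → n → 𝕜} {u' v' : n → 𝕜} {t : 𝕜}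
    (hu : HasDerivAt u u' t) (hv : HasDerivAt v v' t) :
    HasDerivAt (fun s => u s ⬝ᵥ v s) (u' ⬝ᵥ v t + u t ⬝ᵥ v') t := by
  have hsum := HasDerivAt.fun_sum fun i (_ : i ∈ Finset.univ) =>
    (hasDerivAt_pi.mp hu i).fun_mul (hasDerivAt_pi.mp hv i)
  rw [Finset.sum_add_distrib] at hsum
  exact hsum

theorem HasDerivAt.const_mulVec [CompleteSpace 𝕜] (M : Matrix m n 𝕜) {w : 𝕜 → n → 𝕜}
    {w' : n → 𝕜} {t : 𝕜} (hw : HasDerivAt w w' t) :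
    HasDerivAt (fun s => M *ᵥ w s) (M *ᵥ w') t :=
  (LinearMap.toContinuousLinearMap M.mulVecLin).hasFDerivAt.comp_hasDerivAt t hw

end Calculus

section Flow

variable {n : Type*} [Fintype n]

theorem mulVec_dotProduct_add_dotProduct_mulVec (B : Matrix n n ℝ) (u : n → ℝ) :
    (B *ᵥ u) ⬝ᵥ u + u ⬝ᵥ (B *ᵥ u) = u ⬝ᵥ ((Bᵀ + B) *ᵥ u) := by
  rw [add_mulVec, dotProduct_add, dotProduct_mulVec u Bᵀ, vecMul_transpose, dotProduct_comm]

variable [DecidableEq n]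

theorem hasDerivAt_exp_smul_mulVec (B : Matrix n n ℝ) (y : n → ℝ) (t : ℝ) :
    HasDerivAt (fun s : ℝ => exp (s • B) *ᵥ y) (B *ᵥ (exp (t • B) *ᵥ y)) t := by
  -- Matrices carry no global norm; any normed algebra structure with the product topology will do.
  let _ : NormedRing (Matrix n n ℝ) := Matrix.linftyOpNormedRing
  let _ : NormedAlgebra ℝ (Matrix n n ℝ) := Matrix.linftyOpNormedAlgebra
  have h := (LinearMap.toContinuousLinearMap ((mulVecBilin ℝ ℝ).flip y)).hasFDerivAt.comp_hasDerivAt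
    t (hasDerivAt_exp_smul_const' B t)
  rw [mulVec_mulVec]
  exact h

theorem hasDerivAt_dotProduct_self_exp_smul_mulVec (B : Matrix n n ℝ) (y : n → ℝ) (t : ℝ) :
    HasDerivAt (fun s : ℝ => (exp (s • B) *ᵥ y) ⬝ᵥ (exp (s • B) *ᵥ y))
      ((exp (t • B) *ᵥ y) ⬝ᵥ ((Bᵀ + B) *ᵥ (exp (t • B) *ᵥ y))) t := by
  rw [← mulVec_dotProduct_add_dotProduct_mulVec]
  exact (hasDerivAt_exp_smul_mulVec B y t).dotProduct (hasDerivAt_exp_smul_mulVec B y t)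

theorem forall_dotProduct_self_exp_smul_mulVec_iff {B : Matrix n n ℝ}
    (hB : (-(Bᵀ + B)).PosSemidef) (y : n → ℝ) :
    (∀ t : ℝ, (exp (t • B) *ᵥ y) ⬝ᵥ (exp (t • B) *ᵥ y) = y ⬝ᵥ y) ↔
      ∀ t : ℝ, (Bᵀ + B) *ᵥ (exp (t • B) *ᵥ y) = 0 := by
  constructor
  · intro hconst t
    have hderiv := hasDerivAt_dotProduct_self_exp_smul_mulVec B y t
    rw [funext hconst] at hderiv
    have hzero := hderiv.unique (hasDerivAt_const t _)
    rw [← neg_eq_zero, ← neg_mulVec, ← hB.dotProduct_mulVec_zero_iff, star_trivial,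
      neg_mulVec, dotProduct_neg, hzero, neg_zero]
  · intro hker t
    have hderiv s := hasDerivAt_dotProduct_self_exp_smul_mulVec B y s
    simp only [hker, dotProduct_zero] at hderiv
    have hconst := is_const_of_deriv_eq_zero (fun s => (hderiv s).differentiableAt)
      (fun s => (hderiv s).deriv) t 0
    simpa only [zero_smul, exp_zero, one_mulVec] using hconst

theorem mulVec_exp_smul_mulVec_mulVec_eq_zero {B M : Matrix n n ℝ} {y : n → ℝ}
    (h : ∀ t : ℝ, M *ᵥ (exp (t • B) *ᵥ y) = 0) (t : ℝ) :
    M *ᵥ (exp (t • B) *ᵥ (B *ᵥ y)) = 0 := by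
  have hderiv := (hasDerivAt_exp_smul_mulVec B y t).const_mulVec M
  rw [funext h] at hderiv
  have hcomm : exp (t • B) *ᵥ (B *ᵥ y) = B *ᵥ (exp (t • B) *ᵥ y) := by
    rw [mulVec_mulVec, mulVec_mulVec, (((Commute.refl B).smul_left t).exp_left).eq]
  rw [hcomm]
  exact hderiv.unique (hasDerivAt_const t _)

end Flow

theorem eNorm_eq_eNorm_iff {d : ℕ} (x y : Fin d → ℝ) :
    eNorm x = eNorm y ↔ x ⬝ᵥ x = y ⬝ᵥ y := by
  have hnonneg (v : Fin d → ℝ) : 0 ≤ v ⬝ᵥ v := by simpa using dotProduct_star_self_nonneg v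
  exact Real.sqrt_inj (hnonneg x) (hnonneg y)

/-- The orthogonal complement of `V = {x : ‖e^{tB}x‖ = ‖x‖ ∀ t}` is invariant under `B`:
if `x` is orthogonal to every element of `V`, so is `Bx`. -/
theorem orthogonal_complement_invariant {d : ℕ} (B : Matrix (Fin d) (Fin d) ℝ)
    (hB : ∀ x : Fin d → ℝ, x ⬝ᵥ ((Bᵀ + B).mulVec x) ≤ 0)
    (V : Set (Fin d → ℝ))
    (hV : V = {x | ∀ t : ℝ, eNorm ((NormedSpace.exp (t • B)).mulVec x) = eNorm x}) :
    ∀ x : Fin d → ℝ, (∀ y ∈ V, x ⬝ᵥ y = 0) → ∀ y ∈ V, (B.mulVec x) ⬝ᵥ y = 0 := by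
  have hM : (-(Bᵀ + B)).PosSemidef := by
    refine .of_dotProduct_mulVec_nonneg ?_ fun x => ?_
    · simp [IsHermitian, transpose_add, add_comm]
    · simpa only [star_trivial, neg_mulVec, dotProduct_neg, neg_nonneg] using hB x
  have mem_V (y) : y ∈ V ↔ ∀ t : ℝ, (Bᵀ + B) *ᵥ (exp (t • B) *ᵥ y) = 0 := by
    simp only [hV, Set.mem_ofPred_eq, eNorm_eq_eNorm_iff,
      forall_dotProduct_self_exp_smul_mulVec_iff hM]
  intro x hx y hy
  have hBy : B *ᵥ y ∈ V := (mem_V _).2 (mulVec_exp_smul_mulVec_mulVec_eq_zero ((mem_V y).1 hy))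
  have hBty : Bᵀ *ᵥ y = -(B *ᵥ y) := by
    have hMy := (mem_V y).1 hy 0
    rw [zero_smul, exp_zero, one_mulVec, add_mulVec] at hMy
    exact eq_neg_of_add_eq_zero_left hMy
  calc (B *ᵥ x) ⬝ᵥ y = x ⬝ᵥ (Bᵀ *ᵥ y) := by
        rw [dotProduct_mulVec, vecMul_transpose, dotProduct_comm]
    _ = -(x ⬝ᵥ (B *ᵥ y)) := by rw [hBty, dotProduct_neg]
    _ = 0 := by rw [hx _ hBy, neg_zero]
end

section
/- Let B be a d×d real matrix with B^T + B ≤ 0. If there exists τ > 0 such that ‖e^{τB}x‖ = ‖x‖, then ‖e^{tB}x‖ = ‖x‖ for all t ∈ R. -/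
/-!
If `⟪v, A v⟫ ≤ 0` for all `v`, then `φ t = ‖exp (t • A) x‖ ^ 2` has derivative
`2 ⟪y, A y⟫ ≤ 0` (with `y = exp (t • A) x`), so `φ` is antitone; it is also real-analytic.
If `φ τ = φ 0` for some `τ > 0`, monotonicity makes `φ` constant on `[0, τ]`, and the identity
theorem makes it constant on all of `ℝ`. A matrix `B` with `Bᵀ + B ≤ 0` acts on Euclidean space
as such an operator `A`.
-/

open Matrix

open NormedSpace Set Filter Topology
open scoped RealInnerProductSpace

theorem Antitone.eq_const_of_analyticOnNhd {f : ℝ → ℝ} (hf : Antitone f)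
    (hfa : AnalyticOnNhd ℝ f univ) {a b : ℝ} (hab : a < b) (hfab : f b = f a) :
    f = fun _ => f a := by
  have hconst : f =ᶠ[𝓝 ((a + b) / 2)] fun _ => f a := by
    filter_upwards [isOpen_Ioo.mem_nhds (show (a + b) / 2 ∈ Ioo a b by constructor <;> linarith)]
      with s hs
    exact le_antisymm (hf hs.1.le) (hfab ▸ hf hs.2.le)
  exact hfa.eq_of_eventuallyEq analyticOnNhd_const hconst

section Dissipative

variable {E : Type*} [NormedAddCommGroup E] [InnerProductSpace ℝ E] [CompleteSpace E]

theorem hasDerivAt_norm_sq_exp_smul_apply (A : E →L[ℝ] E) (x : E) (t : ℝ) :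
    HasDerivAt (fun s : ℝ => ‖exp (s • A) x‖ ^ 2)
      (2 * ⟪exp (t • A) x, A (exp (t • A) x)⟫) t := by
  have h := (hasDerivAt_exp_smul_const' A t).clm_apply (hasDerivAt_const t x)
  simp only [map_zero, add_zero] at h
  exact h.norm_sq

theorem antitone_norm_sq_exp_smul_apply {A : E →L[ℝ] E} (hA : ∀ v, ⟪v, A v⟫ ≤ 0) (x : E) :
    Antitone fun s : ℝ => ‖exp (s • A) x‖ ^ 2 :=
  antitone_of_hasDerivAt_nonpos (hasDerivAt_norm_sq_exp_smul_apply A x) fun _ =>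
    mul_nonpos_of_nonneg_of_nonpos zero_le_two (hA _)

theorem analyticOnNhd_norm_sq_exp_smul_apply (A : E →L[ℝ] E) (x : E) :
    AnalyticOnNhd ℝ (fun s : ℝ => ‖exp (s • A) x‖ ^ 2) univ := by
  intro t _
  have hy : AnalyticAt ℝ (fun s : ℝ => exp (s • A) x) t :=
    (ContinuousLinearMap.apply ℝ E x).analyticAt _ |>.comp <|
      (exp_analytic (t • A)).comp (f := fun s : ℝ => s • A) (analyticAt_id.smul analyticAt_const)
  simp_rw [← real_inner_self_eq_norm_sq]
  exact (innerSL ℝ).analyticAt_bilinear _ |>.comp (hy.prod hy)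

theorem norm_exp_smul_apply_eq_of_eq {A : E →L[ℝ] E} (hA : ∀ v, ⟪v, A v⟫ ≤ 0) (x : E)
    {τ : ℝ} (hτ : 0 < τ) (h : ‖exp (τ • A) x‖ = ‖x‖) (t : ℝ) :
    ‖exp (t • A) x‖ = ‖x‖ := by
  have hconst := (antitone_norm_sq_exp_smul_apply hA x).eq_const_of_analyticOnNhd
    (analyticOnNhd_norm_sq_exp_smul_apply A x) hτ (by simp [h])
  simpa using congrFun hconst t

end Dissipative

namespace Matrix

variable {n : Type*} [Fintype n] [DecidableEq n]

open scoped Matrix.Norms.L2Operator in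
theorem toEuclideanCLM_exp {𝕜 : Type*} [RCLike 𝕜] (M : Matrix n n 𝕜) :
    toEuclideanCLM (𝕜 := 𝕜) (exp M) = exp (toEuclideanCLM (𝕜 := 𝕜) M) :=
  map_exp_of_mem_ball (𝕂 := 𝕜) toEuclideanCLM (LinearMap.continuous_of_finiteDimensional
      (toEuclideanCLM (n := n) (𝕜 := 𝕜)).toAlgEquiv.toLinearEquiv.toLinearMap) M <|
    (expSeries_radius_eq_top 𝕜 (Matrix n n 𝕜)).symm ▸ edist_lt_top _ _

theorem inner_toEuclideanCLM_self_nonpos {B : Matrix n n ℝ}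
    (hB : ∀ x : n → ℝ, x ⬝ᵥ (Bᵀ + B) *ᵥ x ≤ 0) (v : EuclideanSpace ℝ n) :
    ⟪v, toEuclideanCLM (𝕜 := ℝ) B v⟫ ≤ 0 := by
  have h := hB v.ofLp
  rw [add_mulVec, dotProduct_add, dotProduct_mulVec, vecMul_transpose, dotProduct_comm] at h
  rw [inner_toEuclideanCLM]
  linarith

end Matrix

theorem eNorm_eq_norm_toLp {d : ℕ} (x : Fin d → ℝ) : eNorm x = ‖WithLp.toLp 2 x‖ := by
  rw [eNorm, norm_eq_sqrt_real_inner, EuclideanSpace.inner_toLp_toLp, star_trivial]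

theorem eNorm_exp_smul_mulVec {d : ℕ} (B : Matrix (Fin d) (Fin d) ℝ) (x : Fin d → ℝ) (t : ℝ) :
    eNorm (exp (t • B) *ᵥ x) = ‖exp (t • toEuclideanCLM (𝕜 := ℝ) B) (WithLp.toLp 2 x)‖ := by
  rw [eNorm_eq_norm_toLp, ← toEuclideanCLM_toLp, toEuclideanCLM_exp, map_smul]

/-- If the norm of `e^{τB}x` equals that of `x` for a single `τ > 0`, then the norm is
preserved for all times. -/
theorem norm_preserved_of_single_time {d : ℕ} (B : Matrix (Fin d) (Fin d) ℝ)
    (hB : ∀ x : Fin d → ℝ, x ⬝ᵥ ((Bᵀ + B).mulVec x) ≤ 0)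
    (x : Fin d → ℝ) (τ : ℝ) (hτ : 0 < τ)
    (h : eNorm ((NormedSpace.exp (τ • B)).mulVec x) = eNorm x) :
    ∀ t : ℝ, eNorm ((NormedSpace.exp (t • B)).mulVec x) = eNorm x := by
  intro t
  rw [eNorm_exp_smul_mulVec, eNorm_eq_norm_toLp] at h ⊢
  exact norm_exp_smul_apply_eq_of_eq (inner_toEuclideanCLM_self_nonpos hB) _ hτ h t
end

section
/- Let V_1,…,V_p be linear subspaces of R^d with ∩_{i=1}^p V_i = {0} and dim(Σ_{i=1}^p V_i) > Σ_{i=1}^p dim(V_i) − p + 1. Then for every r > 0, no connected component of (∪_{i=1}^p V_i) ∩ S_r intersects all of the V_i, where S_r is the sphere of radius r. -/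
/-- If `V₁,…,V_p` are subspaces of `ℝ^d` with trivial common intersection and
`dim(ΣᵢVᵢ) > Σᵢ dim Vᵢ − p + 1`, then for every `r > 0` no connected component of
`(⋃ᵢ Vᵢ) ∩ S_r` intersects all the `Vᵢ`'s. -/
theorem no_component_meets_all_subspaces {d p : ℕ} (hp : 2 ≤ p)
    (V : Fin p → Submodule ℝ (EuclideanSpace ℝ (Fin d)))
    (hint : ⨅ i, V i = ⊥)
    (hdim : ((Module.finrank ℝ ↥(⨆ i, V i) : ℤ)) >
      (∑ i, (Module.finrank ℝ ↥(V i) : ℤ)) - p + 1) :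
    ∀ r : ℝ, 0 < r →
      ∀ x ∈ (⋃ i, (V i : Set (EuclideanSpace ℝ (Fin d)))) ∩ Metric.sphere 0 r,
        ∃ i : Fin p,
          connectedComponentIn
              ((⋃ i, (V i : Set (EuclideanSpace ℝ (Fin d)))) ∩ Metric.sphere 0 r) x ∩
            (V i : Set (EuclideanSpace ℝ (Fin d))) = ∅ := by
  intro r hr x hx
  by_contra hcon
  push_neg at hcon
  set S : Set (EuclideanSpace ℝ (Fin d)) :=
    (⋃ i, (V i : Set (EuclideanSpace ℝ (Fin d)))) ∩ Metric.sphere 0 r with hS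
  set C : Set (EuclideanSpace ℝ (Fin d)) := connectedComponentIn S x with hCdef
  have hmeet : ∀ i : Fin p, (C ∩ (V i : Set (EuclideanSpace ℝ (Fin d)))).Nonempty := hcon
  have hCS : C ⊆ S := connectedComponentIn_subset S x
  have hCconn : IsPreconnected C :=
    (isConnected_connectedComponentIn_iff.mpr hx).isPreconnected
  -- the key connectedness step
  have hstep : ∀ A : Finset (Fin p), A.Nonempty → A ≠ Finset.univ →
      ∃ j ∉ A, ∃ z : EuclideanSpace ℝ (Fin d), z ≠ 0 ∧ z ∈ V j ∧
        z ∈ (⨆ i ∈ A, V i : Submodule ℝ (EuclideanSpace ℝ (Fin d))) := by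
    intro A hA hAu
    set T1 : Set (EuclideanSpace ℝ (Fin d)) := ⋃ i ∈ A, (V i : Set _) with hT1
    set T2 : Set (EuclideanSpace ℝ (Fin d)) := ⋃ i ∈ (Finset.univ \ A), (V i : Set _) with hT2
    have hT1c : IsClosed T1 :=
      Set.Finite.isClosed_biUnion A.finite_toSet fun i _ => (V i).closed_of_finiteDimensional
    have hT2c : IsClosed T2 :=
      Set.Finite.isClosed_biUnion (Finset.univ \ A).finite_toSet
        fun i _ => (V i).closed_of_finiteDimensional
    have hcover : C ⊆ T1 ∪ T2 := by
      intro y hy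
      rcases Set.mem_iUnion.mp (hCS hy).1 with ⟨i, hi⟩
      by_cases hiA : i ∈ A
      · exact Or.inl (Set.mem_biUnion hiA hi)
      · exact Or.inr (Set.mem_biUnion (Finset.mem_sdiff.mpr ⟨Finset.mem_univ i, hiA⟩) hi)
    obtain ⟨i0, hi0⟩ := hA
    obtain ⟨j0, hj0⟩ : ∃ j0, j0 ∉ A := by
      by_contra h
      push_neg at h
      exact hAu (Finset.eq_univ_iff_forall.mpr h)
    have hne1 : (C ∩ T1).Nonempty := by
      obtain ⟨y, hyC, hyV⟩ := hmeet i0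
      exact ⟨y, hyC, Set.mem_biUnion hi0 hyV⟩
    have hne2 : (C ∩ T2).Nonempty := by
      obtain ⟨y, hyC, hyV⟩ := hmeet j0
      exact ⟨y, hyC, Set.mem_biUnion (Finset.mem_sdiff.mpr ⟨Finset.mem_univ j0, hj0⟩) hyV⟩
    obtain ⟨z, hzC, hz1, hz2⟩ :=
      (isPreconnected_closed_iff.mp hCconn) T1 T2 hT1c hT2c hcover hne1 hne2
    have hz0 : z ≠ 0 := by
      have := (hCS hzC).2
      rw [mem_sphere_zero_iff_norm] at this
      intro h
      rw [h, norm_zero] at this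
      exact hr.ne this
    rcases Set.mem_iUnion₂.mp hz2 with ⟨j, hjmem, hzj⟩
    rcases Set.mem_iUnion₂.mp hz1 with ⟨i, hiA, hzi⟩
    refine ⟨j, (Finset.mem_sdiff.mp hjmem).2, z, hz0, hzj, ?_⟩
    exact Submodule.mem_iSup_of_mem i (Submodule.mem_iSup_of_mem hiA hzi)
  -- inductive dimension bound
  have key : ∀ n : ℕ, ∀ A : Finset (Fin p), (Finset.univ \ A).card = n → A.Nonempty →
      (Module.finrank ℝ ↥(⨆ i ∈ A, V i) : ℤ) ≤
        (∑ i ∈ A, (Module.finrank ℝ ↥(V i) : ℤ)) - A.card + 1 →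
      (Module.finrank ℝ ↥(⨆ i, V i) : ℤ) ≤
        (∑ i, (Module.finrank ℝ ↥(V i) : ℤ)) - p + 1 := by
    intro n
    induction n using Nat.strong_induction_on with
    | _ n ih =>
      intro A hcard hA hbound
      by_cases hAu : A = Finset.univ
      · subst hAu
        have huniv : (⨆ i ∈ (Finset.univ : Finset (Fin p)), V i) = ⨆ i, V i :=
          le_antisymm (iSup₂_le fun i _ => le_iSup V i)
            (iSup_le fun i => le_iSup₂ (f := fun i _ => V i) i (Finset.mem_univ i))
        rw [huniv] at hbound
        simpa [Finset.card_univ] using hbound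
      · obtain ⟨j, hjA, z, hz0, hzj, hzA⟩ := hstep A hA hAu
        have hle : Submodule.span ℝ {z} ≤ V j ⊓ ⨆ i ∈ A, V i := by
          rw [Submodule.span_le, Set.singleton_subset_iff]
          exact ⟨hzj, hzA⟩
        have hinf1 : 1 ≤ (Module.finrank ℝ ↥(V j ⊓ ⨆ i ∈ A, V i) : ℤ) := by
          have h1 : Module.finrank ℝ ↥(Submodule.span ℝ ({z} : Set _)) = 1 :=
            finrank_span_singleton hz0
          have := Submodule.finrank_mono hle
          omega
        have hsup := Submodule.finrank_sup_add_finrank_inf_eq (V j) (⨆ i ∈ A, V i)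
        have hins : (⨆ i ∈ insert j A, V i) = V j ⊔ ⨆ i ∈ A, V i := by
          apply le_antisymm
          · refine iSup₂_le fun i hi => ?_
            rcases Finset.mem_insert.mp hi with h | h
            · exact h ▸ le_sup_left
            · exact le_trans (le_iSup₂ (f := fun i _ => V i) i h) le_sup_right
          · refine sup_le (le_iSup₂ (f := fun i _ => V i) j (Finset.mem_insert_self j A)) ?_
            exact iSup₂_le fun i hi => le_iSup₂ (f := fun i _ => V i) i (Finset.mem_insert_of_mem hi)
        have hbound' : (Module.finrank ℝ ↥(⨆ i ∈ insert j A, V i) : ℤ) ≤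
            (∑ i ∈ insert j A, (Module.finrank ℝ ↥(V i) : ℤ)) - (insert j A).card + 1 := by
          rw [hins, Finset.sum_insert hjA, Finset.card_insert_of_notMem hjA]
          push_cast
          have := hsup
          push_cast at this ⊢
          omega
        have hcard' : (Finset.univ \ insert j A).card < n := by
          have h1 : insert j A ⊆ Finset.univ := Finset.subset_univ _
          have h2 : (Finset.univ \ insert j A).card = p - (insert j A).card := by
            rw [Finset.card_sdiff_of_subset (Finset.subset_univ _), Finset.card_univ, Fintype.card_fin]
          have h3 : (Finset.univ \ A).card = p - A.card := by
            rw [Finset.card_sdiff_of_subset (Finset.subset_univ _), Finset.card_univ, Fintype.card_fin]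
          have h4 : (insert j A).card = A.card + 1 := Finset.card_insert_of_notMem hjA
          have h5 : A.card < p := by
            have := Finset.card_lt_card (Finset.ssubset_univ_iff.mpr hAu)
            simpa [Finset.card_univ] using this
          omega
        exact ih _ hcard' (insert j A) rfl (Finset.insert_nonempty j A) hbound'
  have hbase : (Module.finrank ℝ ↥(⨆ i, V i) : ℤ) ≤
      (∑ i, (Module.finrank ℝ ↥(V i) : ℤ)) - p + 1 := by
    have hppos : 0 < p := lt_of_lt_of_le (by norm_num) hp
    set i0 : Fin p := ⟨0, hppos⟩
    refine key _ ({i0} : Finset (Fin p)) rfl (Finset.singleton_nonempty _) ?_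
    have hsing : (⨆ i ∈ ({i0} : Finset (Fin p)), V i) = V i0 := by
      apply le_antisymm
      · exact iSup₂_le fun i hi => by rw [Finset.mem_singleton.mp hi]
      · exact le_iSup₂ (f := fun i _ => V i) i0 (Finset.mem_singleton_self i0)
    rw [hsing]
    simp
  exact absurd hbase (not_le.mpr hdim)
end
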